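/- arXiv:1505.04284 — 2 statements merged into one kernel-verified Lean document; each statement's English description precedes it below -/
import Mathlib

section
/- Let C₁ be the n×n circulant matrix Circ(𝔽_0, 𝔽_1, …, 𝔽_{n−1}) with (i,j) entry 𝔽_{(j−i) mod n}. Its Euclidean (Frobenius) norm satisfies ‖C₁‖_E² = n²·𝔽_n² − n·∑_{k=0}^{n−1} ((k+1)/F_{k+1})·(2𝔽_k + 1/F_{k+1}). -/
open Finset

noncomputable def harmFib (n : ℕ) : ℝ := ∑ k ∈ Finset.Icc 1 n, (1 : ℝ) / Nat.fib k

theorem harmFib_succ (n : ℕ) : harmFib (n + 1) = harmFib n + 1 / Nat.fib (n + 1) :=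
  sum_Icc_succ_top (by omega) _

/-- Every row of a circulant matrix is a permutation of its first row. -/
theorem sum_sum_fin_sub_eq_nsmul {M : Type*} [AddCommMonoid M] (n : ℕ) (f : ℕ → M) :
    ∑ i : Fin n, ∑ j : Fin n, f (j - i : Fin n) = n • ∑ k ∈ range n, f k := by
  rcases n with _ | n
  · simp
  have hrow (i : Fin (n + 1)) : ∑ j : Fin (n + 1), f (j - i : Fin (n + 1)) = ∑ k ∈ range (n + 1), f k := by
    rw [← Fin.sum_univ_eq_sum_range]
    exact Fintype.sum_equiv (Equiv.subRight i) _ _ fun _ => rfl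
  simp only [hrow, sum_const, card_univ, Fintype.card_fin]

/-- Telescope `(k + 1) H (k + 1) ^ 2 - k H k ^ 2 = H k ^ 2 + (k + 1) d k (2 H k + d k)`. -/
theorem sum_range_sq_eq_of_succ {R : Type*} [CommRing R] (H d : ℕ → R)
    (h : ∀ k, H (k + 1) = H k + d k) (n : ℕ) :
    ∑ k ∈ range n, H k ^ 2 = n * H n ^ 2 - ∑ k ∈ range n, (k + 1) * d k * (2 * H k + d k) := by
  induction n with
  | zero => simp
  | succ m ih =>
    rw [sum_range_succ, sum_range_succ, ih, h]
    push_cast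
    ring

theorem stmt_11_general (n : ℕ) :
    ∑ i : Fin n, ∑ j : Fin n, |Matrix.of (fun i j : Fin n => harmFib ((j - i : Fin n) : ℕ)) i j| ^ 2 =
      (n : ℝ) ^ 2 * (harmFib n) ^ 2 -
        n * ∑ k ∈ Finset.range n,
          ((k + 1 : ℝ) / Nat.fib (k + 1)) * (2 * harmFib k + 1 / Nat.fib (k + 1)) := by
  simp only [Matrix.of_apply, sq_abs]
  rw [sum_sum_fin_sub_eq_nsmul n (fun k => harmFib k ^ 2), nsmul_eq_mul,
    sum_range_sq_eq_of_succ harmFib (fun k => 1 / Nat.fib (k + 1)) harmFib_succ]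
  simp only [mul_one_div]
  ring

theorem stmt_11 (n : ℕ) (hn : 1 ≤ n) :
    ∑ i : Fin n, ∑ j : Fin n, |Matrix.of (fun i j : Fin n => harmFib ((j - i : Fin n) : ℕ)) i j| ^ 2 =
      (n : ℝ) ^ 2 * (harmFib n) ^ 2 -
        n * ∑ k ∈ Finset.range n,
          ((k + 1 : ℝ) / Nat.fib (k + 1)) * (2 * harmFib k + 1 / Nat.fib (k + 1)) :=
  stmt_11_general n
end

section
/- For the n×n circulant matrix C₂ = Circ(𝔽_0^{(r)}, …, 𝔽_{n−1}^{(r)}) with n, r ≥ 1, the Frobenius norm satisfies 𝔽_{n−1}^{(r+1)} ≤ ‖C₂‖_E ≤ √n · 𝔽_{n−1}^{(r+1)}. -/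
/-! Every row of the circulant matrix is a permutation of `a_k = 𝔽_k^{(r)}`, `k < n`, so the
squared Frobenius norm is `n ∑ a_k²`, while `𝔽_{n-1}^{(r+1)} = ∑ a_k` because `𝔽_0^{(r)} = 0`.
Since the `a_k` are nonnegative, `∑ a_k² ≤ (∑ a_k)²` gives the upper bound and Cauchy–Schwarz,
`(∑ a_k)² ≤ n ∑ a_k²`, the lower one. -/

open Finset

noncomputable def hFib : ℕ → ℕ → ℝ
  | 0, n => 1 / Nat.fib n
  | r + 1, n => ∑ k ∈ Finset.Icc 1 n, hFib r k

lemma hFib_nonneg (r n : ℕ) : 0 ≤ hFib r n := by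
  induction r generalizing n with
  | zero => rw [hFib]; positivity
  | succ r ih => exact sum_nonneg fun k _ => ih k

-- For `r = 0` this is the junk value `1 / F_0 = 1 / 0 = 0`.
lemma hFib_zero_right (r : ℕ) : hFib r 0 = 0 := by
  cases r <;> simp [hFib]

lemma hFib_succ_sub_one (r n : ℕ) : hFib (r + 1) (n - 1) = ∑ k ∈ range n, hFib r k := by
  cases n with
  | zero => simp [hFib]
  | succ m =>
    rw [Nat.add_sub_cancel, hFib, sum_range_succ', hFib_zero_right, add_zero,
      ← Finset.Ico_add_one_right_eq_Icc, sum_Ico_eq_sum_range]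
    simp [add_comm]

theorem Finset.sum_sum_sub_eq_card_nsmul {G M : Type*} [AddGroup G] [Fintype G]
    [AddCommMonoid M] (g : G → M) : ∑ i : G, ∑ j : G, g (j - i) = Fintype.card G • ∑ k : G, g k := by
  rw [← card_univ, ← sum_const]
  exact sum_congr rfl fun i _ => Fintype.sum_equiv (Equiv.subRight i) _ _ fun _ => rfl

theorem Fin.sum_sum_val_sub {M : Type*} [AddCommMonoid M] (n : ℕ) (g : ℕ → M) :
    ∑ i : Fin n, ∑ j : Fin n, g (j - i : Fin n) = n • ∑ k ∈ range n, g k := by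
  cases n with
  | zero => simp
  | succ m =>
    rw [sum_sum_sub_eq_card_nsmul (fun k : Fin (m + 1) => g k), Fintype.card_fin,
      Fin.sum_univ_eq_sum_range]

theorem Real.sum_le_sqrt_card_mul_sum_sq {ι : Type*} (s : Finset ι) (f : ι → ℝ) :
    ∑ i ∈ s, f i ≤ √(#s * ∑ i ∈ s, f i ^ 2) :=
  Real.le_sqrt_of_sq_le sq_sum_le_card_mul_sum_sq

theorem Real.sqrt_card_mul_sum_sq_le {ι : Type*} (s : Finset ι) {f : ι → ℝ}
    (hf : ∀ i ∈ s, 0 ≤ f i) : √(#s * ∑ i ∈ s, f i ^ 2) ≤ √(#s : ℝ) * ∑ i ∈ s, f i := by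
  rw [Real.sqrt_mul (Nat.cast_nonneg _)]
  gcongr
  exact (Real.sqrt_le_left (sum_nonneg hf)).2 (sum_sq_le_sq_sum_of_nonneg hf)

theorem stmt_15_general (n r : ℕ) :
    hFib (r + 1) (n - 1) ≤
        Real.sqrt (∑ i : Fin n, ∑ j : Fin n,
          |Matrix.of (fun i j : Fin n => hFib r ((j - i : Fin n) : ℕ)) i j| ^ 2) ∧
      Real.sqrt (∑ i : Fin n, ∑ j : Fin n,
          |Matrix.of (fun i j : Fin n => hFib r ((j - i : Fin n) : ℕ)) i j| ^ 2) ≤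
        Real.sqrt n * hFib (r + 1) (n - 1) := by
  have hfrob : ∑ i : Fin n, ∑ j : Fin n,
      |Matrix.of (fun i j : Fin n => hFib r ((j - i : Fin n) : ℕ)) i j| ^ 2 =
        n * ∑ k ∈ range n, hFib r k ^ 2 := by
    simp only [Matrix.of_apply, sq_abs]
    rw [Fin.sum_sum_val_sub n (fun k => hFib r k ^ 2), nsmul_eq_mul]
  have hnonneg : ∀ k ∈ range n, 0 ≤ hFib r k := fun k _ => hFib_nonneg r k
  have hlower := Real.sum_le_sqrt_card_mul_sum_sq (range n) (hFib r)
  have hupper := Real.sqrt_card_mul_sum_sq_le (range n) hnonneg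
  rw [card_range] at hlower hupper
  rw [hfrob, hFib_succ_sub_one]
  exact ⟨hlower, hupper⟩

theorem stmt_15 (n r : ℕ) (hn : 1 ≤ n) (hr : 1 ≤ r) :
    hFib (r + 1) (n - 1) ≤
        Real.sqrt (∑ i : Fin n, ∑ j : Fin n,
          |Matrix.of (fun i j : Fin n => hFib r ((j - i : Fin n) : ℕ)) i j| ^ 2) ∧
      Real.sqrt (∑ i : Fin n, ∑ j : Fin n,
          |Matrix.of (fun i j : Fin n => hFib r ((j - i : Fin n) : ℕ)) i j| ^ 2) ≤
        Real.sqrt n * hFib (r + 1) (n - 1) :=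
  stmt_15_general n r
end
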